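/- For every n ≥ 1 and every bounded Lipschitz function f : [0,1) → ℂ, the operator L_n defined by (L_n f)(x) = v_n'(x) f(v_n(x)) + w_n'(x) f(w_n(x)) satisfies ‖L_n f‖_Lip ≤ a_n (32π n⁴ a_n + 8) ‖f‖_Lip. -/

import Mathlib

open MeasureTheory Set Filter

noncomputable section

namespace Gouezel

/-- `b a n = 4 * ∑_{k=1}^n a_k` (left endpoints of the intervals `I_n`). -/
def b (a : ℕ → ℝ) (n : ℕ) : ℝ := 4 * ∑ k ∈ Finset.range n, a (k + 1)

/-- `b_∞ = 4 * ∑_{n=1}^∞ a_n`. -/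
def binf (a : ℕ → ℝ) : ℝ := 4 * ∑' n : ℕ, a (n + 1)

/-- The length `|J| = 1 - b_∞` of the interval `J = [b_∞, 1)`. -/
def lenJ (a : ℕ → ℝ) : ℝ := 1 - binf a

/-- `v_n'(x) = a_n (1 + 2 cos²(2π n⁴ x))`. -/
def vd (a : ℕ → ℝ) (n : ℕ) (x : ℝ) : ℝ :=
  a n * (1 + 2 * Real.cos (2 * Real.pi * (n : ℝ) ^ 4 * x) ^ 2)

/-- `w_n'(x) = a_n (1 + 2 sin²(2π n⁴ x))`. -/
def wd (a : ℕ → ℝ) (n : ℕ) (x : ℝ) : ℝ :=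
  a n * (1 + 2 * Real.sin (2 * Real.pi * (n : ℝ) ^ 4 * x) ^ 2)

/-- The inverse branch `v_n(x) = b_{n-1} + ∫_0^x v_n'(t) dt`. -/
def v (a : ℕ → ℝ) (n : ℕ) (x : ℝ) : ℝ := b a (n - 1) + ∫ t in (0:ℝ)..x, vd a n t

/-- The inverse branch `w_n(x) = b_{n-1} + 2 a_n + ∫_0^x w_n'(t) dt`. -/
def w (a : ℕ → ℝ) (n : ℕ) (x : ℝ) : ℝ :=
  b a (n - 1) + 2 * a n + ∫ t in (0:ℝ)..x, wd a n t

/-- The affine inverse branches `u_j(x) = b_∞ + (j-1)|J|/N + (|J|/N) x`, `1 ≤ j ≤ N`. -/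
def u (a : ℕ → ℝ) (N : ℕ) (j : ℕ) (x : ℝ) : ℝ :=
  binf a + ((j : ℝ) - 1) * (lenJ a / N) + (lenJ a / N) * x

/-- The transfer operator on complex-valued functions. -/
def L (a : ℕ → ℝ) (N : ℕ) (f : ℝ → ℂ) (x : ℝ) : ℂ :=
  (∑' n : ℕ, ((vd a (n + 1) x : ℂ) * f (v a (n + 1) x)
      + (wd a (n + 1) x : ℂ) * f (w a (n + 1) x)))
    + ((lenJ a / (N : ℝ) : ℝ) : ℂ) * ∑ j ∈ Finset.range N, f (u a N (j + 1) x)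

/-- The transfer operator on real-valued functions. -/
def LR (a : ℕ → ℝ) (N : ℕ) (f : ℝ → ℝ) (x : ℝ) : ℝ :=
  (∑' n : ℕ, (vd a (n + 1) x * f (v a (n + 1) x) + wd a (n + 1) x * f (w a (n + 1) x)))
    + (lenJ a / N) * ∑ j ∈ Finset.range N, f (u a N (j + 1) x)

/-- The part `L_n` of the transfer operator coming from the branches `v_n, w_n`. -/
def Ln (a : ℕ → ℝ) (n : ℕ) (f : ℝ → ℂ) (x : ℝ) : ℂ :=
  (vd a n x : ℂ) * f (v a n x) + (wd a n x : ℂ) * f (w a n x)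

/-- Sup norm of `f` on `[0,1)`. -/
def supNorm (f : ℝ → ℂ) : ℝ := ⨆ x : Ico (0:ℝ) 1, ‖f x.1‖

/-- Best Lipschitz constant of `f` on `[0,1)` (the term at `x = y` is `0/0 = 0`). -/
def lipConst (f : ℝ → ℂ) : ℝ :=
  ⨆ p : Ico (0:ℝ) 1 × Ico (0:ℝ) 1, ‖f p.1.1 - f p.2.1‖ / |p.1.1 - p.2.1|

/-- Lipschitz norm `‖f‖_Lip = sup|f| + Lip(f)` on `[0,1)`. -/
def lipNorm (f : ℝ → ℂ) : ℝ := supNorm f + lipConst f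

/-- `f` is bounded and Lipschitz on `[0,1)`. -/
def BddLip (f : ℝ → ℂ) : Prop :=
  ∃ K : ℝ, (∀ x ∈ Ico (0:ℝ) 1, ‖f x‖ ≤ K) ∧
    ∀ x ∈ Ico (0:ℝ) 1, ∀ y ∈ Ico (0:ℝ) 1, ‖f x - f y‖ ≤ K * |x - y|

/-- The specific choice `a_n = 1/(100 n³)`. -/
def aa (n : ℕ) : ℝ := 1 / (100 * (n : ℝ) ^ 3)

/-- Standing hypotheses on the sequence `(a_n)`: positivity and `∑ a_n < 1/4`. -/
def StdHyp (a : ℕ → ℝ) : Prop :=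
  (∀ n : ℕ, 1 ≤ n → 0 < a n) ∧ Summable (fun n : ℕ => a (n + 1)) ∧
    (∑' n : ℕ, a (n + 1)) < 1 / 4

/-- `T : [0,1) → [0,1)` has the maps `v_n, w_n` (`n ≥ 1`) and `u_j` (`1 ≤ j ≤ N`)
as inverse branches. -/
def InverseBranches (a : ℕ → ℝ) (N : ℕ) (T : ℝ → ℝ) : Prop :=
  MapsTo T (Ico (0:ℝ) 1) (Ico (0:ℝ) 1) ∧
    ∀ x ∈ Ico (0:ℝ) 1,
      (∀ n : ℕ, 1 ≤ n → T (v a n x) = x ∧ T (w a n x) = x) ∧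
      (∀ j : ℕ, 1 ≤ j → j ≤ N → T (u a N j x) = x)

/-! Write `k = 4π n⁴`, so that `v_n' = a_n (2 + cos kx)` and `w_n' = a_n (2 - cos kx)`.
Since `k` is a multiple of `2π`, both derivatives integrate to `2 a_n` over `[0,1]`; as they
lie in `[0, 3 a_n]`, the branches are monotone and `3 a_n`-Lipschitz, with
`v_n [0,1] = [b_{n-1}, b_{n-1} + 2a_n]` and `w_n [0,1] = [b_{n-1} + 2a_n, b_n] ⊆ [0,1)`.
This gives `sup |L_n f| ≤ 4 a_n sup |f|`. Because `v_n' + w_n' = 4 a_n` is constant,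
`L_n f x - L_n f y = v_n' x (f (v_n x) - f (v_n y)) + w_n' x (f (w_n x) - f (w_n y))
  + (v_n' x - v_n' y) (f (v_n y) - f (w_n y))`,
and `|v_n' x - v_n' y| ≤ k a_n |x - y|`, `|v_n y - w_n y| ≤ 4 a_n` give
`Lip (L_n f) ≤ (18 + 4k) a_n² Lip f`. -/

lemma vd_eq (a : ℕ → ℝ) (n : ℕ) (x : ℝ) :
    vd a n x = a n * (2 + Real.cos (4 * Real.pi * n ^ 4 * x)) := by
  rw [vd, Real.cos_sq]
  ring_nf

lemma wd_eq (a : ℕ → ℝ) (n : ℕ) (x : ℝ) :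
    wd a n x = a n * (2 - Real.cos (4 * Real.pi * n ^ 4 * x)) := by
  rw [wd, Real.sin_sq, Real.cos_sq]
  ring_nf

lemma vd_add_wd (a : ℕ → ℝ) (n : ℕ) (x : ℝ) : vd a n x + wd a n x = 4 * a n := by
  rw [vd_eq, wd_eq]; ring

lemma continuous_vd (a : ℕ → ℝ) (n : ℕ) : Continuous (vd a n) := by
  unfold vd; fun_prop

lemma continuous_wd (a : ℕ → ℝ) (n : ℕ) : Continuous (wd a n) := by
  unfold wd; fun_prop

lemma integral_cos_freq_eq_zero {n : ℕ} (hn : 0 < n) :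
    ∫ t in (0:ℝ)..1, Real.cos (4 * Real.pi * n ^ 4 * t) = 0 := by
  have hk : (4 * Real.pi * n ^ 4 : ℝ) ≠ 0 := by positivity
  rw [intervalIntegral.integral_comp_mul_left Real.cos hk, integral_cos, mul_zero, mul_one,
    Real.sin_zero, sub_zero, show (4 * Real.pi * n ^ 4 : ℝ) = (4 * n ^ 4 : ℕ) * Real.pi by
      push_cast; ring, Real.sin_nat_mul_pi, smul_zero]

lemma integral_vd {n : ℕ} (hn : 0 < n) (a : ℕ → ℝ) :
    ∫ t in (0:ℝ)..1, vd a n t = 2 * a n := by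
  simp only [vd_eq]
  rw [intervalIntegral.integral_const_mul,
    intervalIntegral.integral_add intervalIntegrable_const
      (Continuous.intervalIntegrable (by fun_prop) 0 1), integral_cos_freq_eq_zero hn,
    intervalIntegral.integral_const, smul_eq_mul]
  ring

lemma integral_wd {n : ℕ} (hn : 0 < n) (a : ℕ → ℝ) :
    ∫ t in (0:ℝ)..1, wd a n t = 2 * a n := by
  simp only [wd_eq]
  rw [intervalIntegral.integral_const_mul,
    intervalIntegral.integral_sub intervalIntegrable_const
      (Continuous.intervalIntegrable (by fun_prop) 0 1), integral_cos_freq_eq_zero hn,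
    intervalIntegral.integral_const, smul_eq_mul]
  ring

lemma integral_mem_Icc_of_nonneg {g : ℝ → ℝ} (hg : Continuous g) (hg0 : ∀ t, 0 ≤ g t)
    {c d x : ℝ} (hx : x ∈ Icc c d) : ∫ t in c..x, g t ∈ Icc 0 (∫ t in c..d, g t) := by
  refine ⟨intervalIntegral.integral_nonneg hx.1 fun t _ => hg0 t, ?_⟩
  rw [← intervalIntegral.integral_add_adjacent_intervals (hg.intervalIntegrable c x)
    (hg.intervalIntegrable x d)]
  exact le_add_of_nonneg_right (intervalIntegral.integral_nonneg hx.2 fun t _ => hg0 t)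

lemma abs_integral_sub_integral_le {g : ℝ → ℝ} {C : ℝ} (hg : Continuous g)
    (hC : ∀ t, |g t| ≤ C) (c x y : ℝ) :
    |(∫ t in c..x, g t) - ∫ t in c..y, g t| ≤ C * |x - y| := by
  rw [intervalIntegral.integral_interval_sub_left (hg.intervalIntegrable c x)
    (hg.intervalIntegrable c y)]
  exact intervalIntegral.norm_integral_le_of_norm_le_const fun t _ =>
    (Real.norm_eq_abs _).trans_le (hC t)

section Branches

variable {a : ℕ → ℝ} {n : ℕ}

lemma vd_nonneg (ha : 0 ≤ a n) (x : ℝ) : 0 ≤ vd a n x := by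
  rw [vd_eq]; nlinarith [Real.neg_one_le_cos (4 * Real.pi * n ^ 4 * x)]

lemma vd_le (ha : 0 ≤ a n) (x : ℝ) : vd a n x ≤ 3 * a n := by
  rw [vd_eq]; nlinarith [Real.cos_le_one (4 * Real.pi * n ^ 4 * x)]

lemma wd_nonneg (ha : 0 ≤ a n) (x : ℝ) : 0 ≤ wd a n x := by
  rw [wd_eq]; nlinarith [Real.cos_le_one (4 * Real.pi * n ^ 4 * x)]

lemma wd_le (ha : 0 ≤ a n) (x : ℝ) : wd a n x ≤ 3 * a n := by
  rw [wd_eq]; nlinarith [Real.neg_one_le_cos (4 * Real.pi * n ^ 4 * x)]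

lemma abs_vd_sub_le (ha : 0 ≤ a n) (x y : ℝ) :
    |vd a n x - vd a n y| ≤ 4 * Real.pi * n ^ 4 * a n * |x - y| := by
  have hcos := Real.abs_cos_sub_cos_le (4 * Real.pi * n ^ 4 * x) (4 * Real.pi * n ^ 4 * y)
  rw [← mul_sub, abs_mul, abs_of_nonneg (by positivity : (0:ℝ) ≤ 4 * Real.pi * n ^ 4)] at hcos
  rw [vd_eq, vd_eq, ← mul_sub, add_sub_add_left_eq_sub, abs_mul, abs_of_nonneg ha]
  nlinarith

lemma v_mem_Icc (hn : 0 < n) (ha : 0 ≤ a n) {x : ℝ} (hx : x ∈ Icc (0:ℝ) 1) :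
    v a n x ∈ Icc (b a (n - 1)) (b a (n - 1) + 2 * a n) := by
  have h := integral_mem_Icc_of_nonneg (continuous_vd a n) (vd_nonneg ha) hx
  rw [integral_vd hn] at h
  rw [v]
  exact ⟨by linarith [h.1], by linarith [h.2]⟩

lemma w_mem_Icc (hn : 0 < n) (ha : 0 ≤ a n) {x : ℝ} (hx : x ∈ Icc (0:ℝ) 1) :
    w a n x ∈ Icc (b a (n - 1) + 2 * a n) (b a (n - 1) + 4 * a n) := by
  have h := integral_mem_Icc_of_nonneg (continuous_wd a n) (wd_nonneg ha) hx
  rw [integral_wd hn] at h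
  rw [w]
  exact ⟨by linarith [h.1], by linarith [h.2]⟩

lemma abs_v_sub_w_le (hn : 0 < n) (ha : 0 ≤ a n) {x : ℝ} (hx : x ∈ Icc (0:ℝ) 1) :
    |v a n x - w a n x| ≤ 4 * a n := by
  have hv := v_mem_Icc hn ha hx
  have hw := w_mem_Icc hn ha hx
  exact abs_sub_le_iff.2 ⟨by linarith [hv.2, hw.1], by linarith [hv.1, hw.2]⟩

lemma abs_v_sub_le (ha : 0 ≤ a n) (x y : ℝ) : |v a n x - v a n y| ≤ 3 * a n * |x - y| := by
  simpa only [v, add_sub_add_left_eq_sub] using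
    abs_integral_sub_integral_le (continuous_vd a n)
      (fun t => abs_le.2 ⟨by linarith [vd_nonneg ha t], vd_le ha t⟩) 0 x y

lemma abs_w_sub_le (ha : 0 ≤ a n) (x y : ℝ) : |w a n x - w a n y| ≤ 3 * a n * |x - y| := by
  simpa only [w, add_sub_add_left_eq_sub] using
    abs_integral_sub_integral_le (continuous_wd a n)
      (fun t => abs_le.2 ⟨by linarith [wd_nonneg ha t], wd_le ha t⟩) 0 x y

end Branches

lemma b_nonneg {a : ℕ → ℝ} (ha : ∀ k, 0 ≤ a (k + 1)) (m : ℕ) : 0 ≤ b a m :=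
  mul_nonneg zero_le_four (Finset.sum_nonneg fun k _ => ha k)

lemma b_le_binf {a : ℕ → ℝ} (ha : ∀ k, 0 ≤ a (k + 1)) (hs : Summable fun k => a (k + 1))
    (m : ℕ) : b a m ≤ binf a :=
  mul_le_mul_of_nonneg_left (hs.sum_le_tsum _ fun k _ => ha k) zero_le_four

lemma b_pred_add {n : ℕ} (hn : 0 < n) (a : ℕ → ℝ) : b a (n - 1) + 4 * a n = b a n := by
  obtain ⟨m, rfl⟩ := Nat.exists_eq_succ_of_ne_zero hn.ne'
  rw [b, b, Nat.succ_sub_one, Finset.sum_range_succ]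
  ring

lemma Icc_b_subset_Ico {a : ℕ → ℝ} (ha : StdHyp a) {n : ℕ} (hn : 0 < n) :
    Icc (b a (n - 1)) (b a (n - 1) + 4 * a n) ⊆ Ico 0 1 := by
  obtain ⟨hpos, hs, hlt⟩ := ha
  have hnonneg : ∀ k, 0 ≤ a (k + 1) := fun k => (hpos (k + 1) k.succ_pos).le
  rw [b_pred_add hn]
  have hbinf : binf a < 1 := by rw [binf]; linarith
  exact Icc_subset_Ico (b_nonneg hnonneg _) ((b_le_binf hnonneg hs n).trans_lt hbinf)

lemma v_mem_Ico {a : ℕ → ℝ} (ha : StdHyp a) {n : ℕ} (hn : 0 < n) {x : ℝ}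
    (hx : x ∈ Ico (0:ℝ) 1) : v a n x ∈ Ico 0 1 := by
  have hv := v_mem_Icc hn (ha.1 n hn).le (Ico_subset_Icc_self hx)
  exact Icc_b_subset_Ico ha hn ⟨hv.1, by linarith [hv.2, ha.1 n hn]⟩

lemma w_mem_Ico {a : ℕ → ℝ} (ha : StdHyp a) {n : ℕ} (hn : 0 < n) {x : ℝ}
    (hx : x ∈ Ico (0:ℝ) 1) : w a n x ∈ Ico 0 1 := by
  have hw := w_mem_Icc hn (ha.1 n hn).le (Ico_subset_Icc_self hx)
  exact Icc_b_subset_Ico ha hn ⟨by linarith [hw.1, ha.1 n hn], hw.2⟩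

section Norms

variable {f : ℝ → ℂ}

instance : Nonempty (Ico (0:ℝ) 1) := (nonempty_Ico.2 zero_lt_one).to_subtype

lemma supNorm_nonneg (f : ℝ → ℂ) : 0 ≤ supNorm f :=
  Real.iSup_nonneg fun _ => norm_nonneg _

lemma lipConst_nonneg (f : ℝ → ℂ) : 0 ≤ lipConst f :=
  Real.iSup_nonneg fun _ => div_nonneg (norm_nonneg _) (abs_nonneg _)

lemma supNorm_le {C : ℝ} (h : ∀ x ∈ Ico (0:ℝ) 1, ‖f x‖ ≤ C) : supNorm f ≤ C :=
  ciSup_le fun x => h x.1 x.2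

lemma lipConst_le {K : ℝ} (hK : 0 ≤ K)
    (h : ∀ x ∈ Ico (0:ℝ) 1, ∀ y ∈ Ico (0:ℝ) 1, ‖f x - f y‖ ≤ K * |x - y|) :
    lipConst f ≤ K :=
  ciSup_le fun p => div_le_of_le_mul₀ (abs_nonneg _) hK (h _ p.1.2 _ p.2.2)

lemma norm_le_supNorm (hf : BddLip f) {x : ℝ} (hx : x ∈ Ico (0:ℝ) 1) :
    ‖f x‖ ≤ supNorm f := by
  obtain ⟨K, hbdd, -⟩ := hf
  exact le_ciSup (f := fun x : Ico (0:ℝ) 1 => ‖f x.1‖)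
    ⟨K, forall_mem_range.2 fun x => hbdd x.1 x.2⟩ ⟨x, hx⟩

lemma norm_sub_le_lipConst_mul (hf : BddLip f) {x y : ℝ} (hx : x ∈ Ico (0:ℝ) 1)
    (hy : y ∈ Ico (0:ℝ) 1) : ‖f x - f y‖ ≤ lipConst f * |x - y| := by
  obtain ⟨K, hbdd, hlip⟩ := hf
  rcases eq_or_ne x y with rfl | hxy
  · simp
  have hK : 0 ≤ K := (norm_nonneg _).trans (hbdd x hx)
  have hle := le_ciSup (f := fun p : Ico (0:ℝ) 1 × Ico (0:ℝ) 1 =>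
      ‖f p.1.1 - f p.2.1‖ / |p.1.1 - p.2.1|)
    ⟨K, forall_mem_range.2 fun p =>
      div_le_of_le_mul₀ (abs_nonneg _) hK (hlip _ p.1.2 _ p.2.2)⟩ (⟨x, hx⟩, ⟨y, hy⟩)
  exact (div_le_iff₀ (abs_pos.2 (sub_ne_zero.2 hxy))).1 hle

end Norms

section Transfer

variable {a : ℕ → ℝ} {n : ℕ} {f : ℝ → ℂ}

lemma norm_ofReal_le {r R : ℝ} (h0 : 0 ≤ r) (h : r ≤ R) : ‖(r : ℂ)‖ ≤ R := by
  rwa [Complex.norm_real, Real.norm_of_nonneg h0]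

lemma norm_Ln_le (ha : StdHyp a) (hn : 0 < n) {M : ℝ}
    (hf : ∀ x ∈ Ico (0:ℝ) 1, ‖f x‖ ≤ M) {x : ℝ} (hx : x ∈ Ico (0:ℝ) 1) :
    ‖Ln a n f x‖ ≤ 4 * a n * M := by
  have h0 := (ha.1 n hn).le
  calc ‖Ln a n f x‖ ≤ vd a n x * M + wd a n x * M :=
        (norm_add_le _ _).trans (add_le_add
          (norm_mul_le_of_le (norm_ofReal_le (vd_nonneg h0 x) le_rfl)
            (hf _ (v_mem_Ico ha hn hx)))
          (norm_mul_le_of_le (norm_ofReal_le (wd_nonneg h0 x) le_rfl)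
            (hf _ (w_mem_Ico ha hn hx))))
    _ = 4 * a n * M := by rw [← add_mul, vd_add_wd]

lemma Ln_sub_Ln (a : ℕ → ℝ) (n : ℕ) (f : ℝ → ℂ) (x y : ℝ) :
    Ln a n f x - Ln a n f y
      = vd a n x * (f (v a n x) - f (v a n y)) + wd a n x * (f (w a n x) - f (w a n y))
        + (vd a n x - vd a n y) * (f (v a n y) - f (w a n y)) := by
  have hsum : (vd a n x : ℂ) + wd a n x = vd a n y + wd a n y := by
    exact_mod_cast (vd_add_wd a n x).trans (vd_add_wd a n y).symm
  simp only [Ln]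
  linear_combination f (w a n y) * hsum

lemma norm_Ln_sub_le (ha : StdHyp a) (hn : 0 < n) {K : ℝ} (hK : 0 ≤ K)
    (hf : ∀ x ∈ Ico (0:ℝ) 1, ∀ y ∈ Ico (0:ℝ) 1, ‖f x - f y‖ ≤ K * |x - y|)
    {x y : ℝ} (hx : x ∈ Ico (0:ℝ) 1) (hy : y ∈ Ico (0:ℝ) 1) :
    ‖Ln a n f x - Ln a n f y‖ ≤ (18 + 16 * Real.pi * n ^ 4) * a n ^ 2 * K * |x - y| := by
  have h0 := (ha.1 n hn).le
  have ev : ‖(vd a n x : ℂ) * (f (v a n x) - f (v a n y))‖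
      ≤ 3 * a n * (K * (3 * a n * |x - y|)) :=
    norm_mul_le_of_le (norm_ofReal_le (vd_nonneg h0 x) (vd_le h0 x))
      ((hf _ (v_mem_Ico ha hn hx) _ (v_mem_Ico ha hn hy)).trans
        (mul_le_mul_of_nonneg_left (abs_v_sub_le h0 x y) hK))
  have ew : ‖(wd a n x : ℂ) * (f (w a n x) - f (w a n y))‖
      ≤ 3 * a n * (K * (3 * a n * |x - y|)) :=
    norm_mul_le_of_le (norm_ofReal_le (wd_nonneg h0 x) (wd_le h0 x))
      ((hf _ (w_mem_Ico ha hn hx) _ (w_mem_Ico ha hn hy)).trans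
        (mul_le_mul_of_nonneg_left (abs_w_sub_le h0 x y) hK))
  have evw : ‖((vd a n x : ℂ) - vd a n y) * (f (v a n y) - f (w a n y))‖
      ≤ 4 * Real.pi * n ^ 4 * a n * |x - y| * (K * (4 * a n)) := by
    refine norm_mul_le_of_le ?_ ((hf _ (v_mem_Ico ha hn hy) _ (w_mem_Ico ha hn hy)).trans
      (mul_le_mul_of_nonneg_left (abs_v_sub_w_le hn h0 (Ico_subset_Icc_self hy)) hK))
    rw [← Complex.ofReal_sub, Complex.norm_real, Real.norm_eq_abs]
    exact abs_vd_sub_le h0 x y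
  rw [Ln_sub_Ln]
  refine (norm_add₃_le.trans (add_le_add_three ev ew evw)).trans_eq ?_
  ring

end Transfer

/-- `‖L_n f‖_Lip ≤ a_n (32π n⁴ a_n + 8) ‖f‖_Lip` for every bounded
Lipschitz `f : [0,1) → ℂ`. -/
theorem stmt5 (a : ℕ → ℝ) (ha : StdHyp a) (n : ℕ) (hn : 1 ≤ n)
    (f : ℝ → ℂ) (hf : BddLip f) :
    lipNorm (Ln a n f) ≤ a n * (32 * Real.pi * (n : ℝ) ^ 4 * a n + 8) * lipNorm f := by
  have hsup : supNorm (Ln a n f) ≤ 4 * a n * supNorm f :=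
    supNorm_le fun x hx => norm_Ln_le ha hn (fun y hy => norm_le_supNorm hf hy) hx
  have hlip : lipConst (Ln a n f) ≤ (18 + 16 * Real.pi * n ^ 4) * a n ^ 2 * lipConst f := by
    refine lipConst_le (mul_nonneg (by positivity) (lipConst_nonneg f)) fun x hx y hy =>
      norm_Ln_sub_le ha hn (lipConst_nonneg f)
        (fun x hx y hy => norm_sub_le_lipConst_mul hf hx hy) hx hy
  have hπn : 9 / 8 ≤ Real.pi * n ^ 4 := by
    have : (1:ℝ) ≤ n ^ 4 := one_le_pow₀ (by exact_mod_cast hn)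
    nlinarith [Real.pi_gt_three]
  have hπn₀ : 0 ≤ Real.pi * n ^ 4 := by positivity
  have han := (ha.1 n hn).le
  have hM := supNorm_nonneg f
  have hK := lipConst_nonneg f
  calc lipNorm (Ln a n f) ≤ 4 * a n * supNorm f
        + (18 + 16 * Real.pi * n ^ 4) * a n ^ 2 * lipConst f := add_le_add hsup hlip
    _ ≤ a n * (32 * Real.pi * (n : ℝ) ^ 4 * a n + 8) * lipNorm f := by
      rw [lipNorm]
      nlinarith [mul_nonneg (mul_nonneg (sq_nonneg (a n)) hπn₀) hM,
        mul_nonneg (mul_nonneg (sq_nonneg (a n)) (sub_nonneg.2 hπn)) hK,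
        mul_nonneg han hM, mul_nonneg han hK]

end Gouezel
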